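/- For all integers 0 ≤ k ≤ j, the following identity holds in ℚ(q, a): ∑_{x=0}^{j−k} (−q)^x a^{2x} q^{−4jx + 2kx + x²} [j−k; x]_+ · (a² q^{2−2j}; q²)_{j−k−x} · (q^{2+2j−2k−2x}; q²)_x = (a² q^{2−4j+2k}; q²)_{j−k}. -/

import Mathlib

noncomputable section

open Finset

/-- The field `ℚ(q, a)` of rational functions in two variables. -/
abbrev F : Type := FractionRing (MvPolynomial (Fin 2) ℚ)

/-- The variable `q`. -/
def q : F := algebraMap (MvPolynomial (Fin 2) ℚ) F (MvPolynomial.X 0)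

/-- The variable `a`. -/
def a : F := algebraMap (MvPolynomial (Fin 2) ℚ) F (MvPolynomial.X 1)

/-- The q-Pochhammer symbol `(x; y)_n = ∏_{j=0}^{n-1} (1 - x yʲ)`. -/
def qPoch (x y : F) (n : ℕ) : F := ∏ i ∈ Finset.range n, (1 - x * y ^ i)

/-- `(q²;q²)_m = ∏_{i=1}^{m} (1 - q^{2i})`. -/
def qp (m : ℕ) : F := qPoch (q ^ 2) (q ^ 2) m

/-- The positive quantum binomial coefficient `[N; k]₊`. -/
def qbin (N k : ℕ) : F := qp N / (qp k * qp (N - k))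

/-! With `Q = q²`, `b = a²q^{2-2j}` and `n = j - k`, the reflection
`(Q^{-n}; Q)_t = (-1)^t q^{t²-t-2nt} (q^{2+2n-2t}; Q)_t` turns the summand into
`[n; t] bᵗ (Q^{-n}; Q)_t (b; Q)_{n-t}`, so the identity is the q-Vandermonde
convolution `(xy; Q)_n = ∑ₜ [n; t] yᵗ (x; Q)_t (y; Q)_{n-t}` at `x = Q^{-n}`, `y = b`.
The convolution follows by induction on `n` from the q-Pascal rule. -/

lemma q_ne_zero : q ≠ 0 := by
  rw [q, ne_eq, map_eq_zero_iff _ (IsFractionRing.injective (MvPolynomial (Fin 2) ℚ) F)]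
  exact MvPolynomial.X_ne_zero 0

lemma one_sub_q_pow_ne_zero {n : ℕ} (hn : n ≠ 0) : (1 : F) - q ^ n ≠ 0 := by
  rw [sub_ne_zero, ne_comm, q, ← map_pow, ← map_one (algebraMap (MvPolynomial (Fin 2) ℚ) F),
    (IsFractionRing.injective (MvPolynomial (Fin 2) ℚ) F).ne_iff]
  intro h
  have h2 := congrArg (MvPolynomial.eval fun _ => (2 : ℚ)) h
  simp only [map_pow, MvPolynomial.eval_X, map_one] at h2
  exact (one_lt_pow₀ (by norm_num : (1 : ℚ) < 2) hn).ne' h2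

lemma qPoch_zero (x y : F) : qPoch x y 0 = 1 := prod_range_zero _

lemma qPoch_succ (x y : F) (n : ℕ) : qPoch x y (n + 1) = qPoch x y n * (1 - x * y ^ n) :=
  prod_range_succ _ _

lemma qPoch_succ' (x y : F) (n : ℕ) : qPoch x y (n + 1) = (1 - x) * qPoch (x * y) y n := by
  rw [qPoch, prod_range_succ', pow_zero, mul_one, mul_comm]
  exact congrArg _ (prod_congr rfl fun i _ => by ring)

lemma qp_succ (n : ℕ) : qp (n + 1) = qp n * (1 - q ^ (2 * (n + 1))) := by
  unfold qp
  rw [qPoch_succ, ← pow_mul, ← pow_add]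
  ring_nf

lemma qp_ne_zero (n : ℕ) : qp n ≠ 0 := by
  induction n with
  | zero => simp [qp, qPoch_zero]
  | succ n ih => exact qp_succ n ▸ mul_ne_zero ih (one_sub_q_pow_ne_zero (by omega))

lemma qbin_zero_right (n : ℕ) : qbin n 0 = 1 := by
  rw [qbin, Nat.sub_zero, show qp 0 = 1 from qPoch_zero _ _, one_mul, div_self (qp_ne_zero n)]

lemma qbin_self (n : ℕ) : qbin n n = 1 := by
  rw [qbin, Nat.sub_self, show qp 0 = 1 from qPoch_zero _ _, mul_one, div_self (qp_ne_zero n)]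

lemma qbin_succ_succ {n k : ℕ} (hk : k < n) :
    qbin (n + 1) (k + 1) = q ^ (2 * (n - k)) * qbin n k + qbin n (k + 1) := by
  obtain ⟨m, rfl⟩ : ∃ m, n = k + m + 1 := ⟨n - k - 1, by omega⟩
  rw [qbin, qbin, qbin, show k + m + 1 + 1 - (k + 1) = m + 1 by omega,
    show k + m + 1 - k = m + 1 by omega, show k + m + 1 - (k + 1) = m by omega,
    qp_succ (k + m + 1), qp_succ k, qp_succ m]
  have hqk := one_sub_q_pow_ne_zero (n := 2 * (k + 1)) (by omega)
  have hqm := one_sub_q_pow_ne_zero (n := 2 * (m + 1)) (by omega)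
  have hpk := qp_ne_zero k
  have hpm := qp_ne_zero m
  field_simp
  ring

/-- The q-Vandermonde convolution. -/
theorem qPoch_mul_eq_sum (x y : F) (n : ℕ) :
    qPoch (x * y) (q ^ 2) n =
      ∑ t ∈ range (n + 1), qbin n t * y ^ t * qPoch x (q ^ 2) t * qPoch y (q ^ 2) (n - t) := by
  induction n with
  | zero => simp [qPoch_zero, qbin_self]
  | succ n ih =>
    set P := fun z => qPoch z (q ^ 2)
    set A := fun t => qbin n t * y ^ t * P x t * P y (n + 1 - t)
    set B := fun t => q ^ (2 * (n - t)) * qbin n t * y ^ (t + 1) * P x (t + 1) * P y (n - t)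
    -- `(1 - y Q^{n-t}) + y Q^{n-t} (1 - x Q^t) = 1 - x y Q^n`
    have hsplit : ∀ t ∈ range (n + 1),
        qbin n t * y ^ t * P x t * P y (n - t) * (1 - x * y * (q ^ 2) ^ n) = A t + B t := by
      intro t ht
      obtain ⟨s, rfl⟩ : ∃ s, n = t + s := ⟨n - t, by have := mem_range.1 ht; omega⟩
      simp only [A, B, P, show t + s + 1 - t = s + 1 by omega, show t + s - t = s by omega,
        qPoch_succ, ← pow_mul, pow_add]
      ring
    have hpascal : ∀ t ∈ range n,
        qbin (n + 1) (t + 1) * y ^ (t + 1) * P x (t + 1) * P y (n + 1 - (t + 1)) =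
          A (t + 1) + B t := by
      intro t ht
      rw [qbin_succ_succ (mem_range.1 ht), show n + 1 - (t + 1) = n - t by omega]
      simp only [A, B, show n + 1 - (t + 1) = n - t by omega]
      ring
    rw [qPoch_succ, ih, sum_mul, sum_congr rfl hsplit, sum_add_distrib, sum_range_succ' A,
      sum_range_succ B, sum_range_succ' _ (n + 1), sum_range_succ _ n, sum_congr rfl hpascal,
      sum_add_distrib]
    simp only [A, B, P, qbin_zero_right, qbin_self, Nat.sub_self, Nat.sub_zero]
    ring

lemma qPoch_eq_zpow_mul_qPoch_inv {z c : F} (hz : z ≠ 0) (hc : c ≠ 0) (t : ℕ) :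
    qPoch c (z ^ 2) t =
      (-c) ^ t * z ^ ((t : ℤ) ^ 2 - t) * qPoch (c⁻¹ * z ^ (2 - 2 * (t : ℤ))) (z ^ 2) t := by
  induction t with
  | zero => simp [qPoch_zero]
  | succ t ih =>
    have hshift : c⁻¹ * z ^ (2 - 2 * ((t + 1 : ℕ) : ℤ)) * z ^ 2 = c⁻¹ * z ^ (2 - 2 * (t : ℤ)) := by
      rw [mul_assoc, ← zpow_natCast z 2, ← zpow_add₀ hz]
      push_cast; ring_nf
    rw [qPoch_succ, ih, qPoch_succ', hshift]
    have hexp : z ^ (((t + 1 : ℕ) : ℤ) ^ 2 - (t + 1 : ℕ)) = z ^ ((t : ℤ) ^ 2 - t) * (z ^ 2) ^ t := by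
      rw [← pow_mul, ← zpow_natCast z (2 * t), ← zpow_add₀ hz]
      push_cast; ring_nf
    have hinv : z ^ (2 - 2 * ((t + 1 : ℕ) : ℤ)) = ((z ^ 2) ^ t)⁻¹ := by
      rw [← pow_mul, ← zpow_natCast, ← zpow_neg]
      push_cast; ring_nf
    have hzt : (z ^ 2) ^ t ≠ 0 := pow_ne_zero _ (pow_ne_zero _ hz)
    rw [hexp, hinv]
    field_simp
    ring

/-- The key summation `L = (a²q^{2−4j+2k};q²)_{j−k}` from the proof of Lemma `lemmaclosure2`. -/
theorem closure_TRI_key_sum (j k : ℕ) (hk : k ≤ j) :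
    ∑ t ∈ Finset.range (j - k + 1),
      (-q) ^ t * a ^ (2 * t) *
        q ^ (-4 * (j : ℤ) * (t : ℤ) + 2 * (k : ℤ) * (t : ℤ) + (t : ℤ) ^ 2) *
        qbin (j - k) t *
        qPoch (a ^ 2 * q ^ (2 - 2 * (j : ℤ))) (q ^ 2) (j - k - t) *
        qPoch (q ^ (2 + 2 * (j : ℤ) - 2 * (k : ℤ) - 2 * (t : ℤ))) (q ^ 2) t =
      qPoch (a ^ 2 * q ^ (2 - 4 * (j : ℤ) + 2 * (k : ℤ))) (q ^ 2) (j - k) := by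
  have hn : ((j - k : ℕ) : ℤ) = j - k := Nat.cast_sub hk
  have hx : a ^ 2 * q ^ (2 - 4 * (j : ℤ) + 2 * (k : ℤ)) =
      q ^ (-2 * ((j - k : ℕ) : ℤ)) * (a ^ 2 * q ^ (2 - 2 * (j : ℤ))) := by
    rw [mul_left_comm, ← zpow_add₀ q_ne_zero, hn]
    ring_nf
  rw [hx, qPoch_mul_eq_sum]
  refine sum_congr rfl fun t _ => ?_
  have hrefl : (q ^ (-2 * ((j - k : ℕ) : ℤ)))⁻¹ * q ^ (2 - 2 * (t : ℤ)) =
      q ^ (2 + 2 * (j : ℤ) - 2 * (k : ℤ) - 2 * (t : ℤ)) := by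
    rw [← zpow_neg, ← zpow_add₀ q_ne_zero, hn]
    ring_nf
  have hexp : q ^ t * q ^ (-4 * (j : ℤ) * t + 2 * (k : ℤ) * t + (t : ℤ) ^ 2) =
      (q ^ (2 - 2 * (j : ℤ))) ^ t * (q ^ (-2 * ((j - k : ℕ) : ℤ))) ^ t * q ^ ((t : ℤ) ^ 2 - t) := by
    simp only [← zpow_natCast, ← zpow_mul, ← zpow_add₀ q_ne_zero, hn]
    ring_nf
  rw [qPoch_eq_zpow_mul_qPoch_inv (c := q ^ (-2 * ((j - k : ℕ) : ℤ))) q_ne_zero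
    (zpow_ne_zero _ q_ne_zero), hrefl, neg_pow, neg_pow (q ^ _), mul_pow, ← pow_mul]
  linear_combination (-1) ^ t * a ^ (2 * t) * qbin (j - k) t *
    qPoch (a ^ 2 * q ^ (2 - 2 * (j : ℤ))) (q ^ 2) (j - k - t) *
    qPoch (q ^ (2 + 2 * (j : ℤ) - 2 * (k : ℤ) - 2 * (t : ℤ))) (q ^ 2) t * hexp
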